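/- arXiv:2504.20715 — 2 statements merged into one kernel-verified Lean document; each statement's English description precedes it below -/
import Mathlib

section
/- Let d ≥ 1, let A : ℝ → Matrix (Fin d) (Fin d) ℝ be continuous, and let J : ℝ → Matrix (Fin d) (Fin d) ℝ be differentiable with J'(t) = A(t) · J(t) for all t ∈ ℝ. Then det(J(t)) = det(J(0)) · exp(∫_0^t trace(A(s)) ds) for all t ∈ ℝ. In particular, if trace(A(t)) = 0 for all t (the divergence-free case arising from Liouville's theorem) and J(0) is the identity matrix, then det(J(t)) = 1 for all t. -/
/-!
Jacobi's formula differentiates `det` row by row. When `J' = A J`, replacing row `r` of `J` by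
row `r` of `A J` multiplies the determinant by `A r r`, so `(det J)' = trace A · det J`. Solving
this scalar linear ODE amounts to noting that `det J · exp (-∫ trace A)` has zero derivative.
-/

open Matrix Finset

namespace Matrix

variable {n : Type*} [Fintype n] [DecidableEq n]

theorem det_updateRow_mul_row {R : Type*} [CommRing R] (A M : Matrix n n R) (r : n) :
    (M.updateRow r ((A * M) r)).det = A r r * M.det := by
  have hrow : (A * M) r = ∑ k, A r k • M k := by
    funext j
    simp [mul_apply]
  rw [hrow, det_updateRow_sum, smul_eq_mul]

variable {𝕜 : Type*} [NontriviallyNormedField 𝕜]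

theorem hasDerivAt_det {M : 𝕜 → Matrix n n 𝕜} {M' : Matrix n n 𝕜} {t : 𝕜}
    (h : ∀ i j, HasDerivAt (fun s => M s i j) (M' i j) t) :
    HasDerivAt (fun s => (M s).det) (∑ r, ((M t).updateRow r (M' r)).det) t := by
  have hsum : HasDerivAt (fun s => (M s).det) (∑ σ : Equiv.Perm n,
      (Equiv.Perm.sign σ : 𝕜) * ∑ i, (∏ j ∈ univ.erase i, M t (σ j) j) • M' (σ i) i) t := by
    simp_rw [det_apply']
    exact HasDerivAt.fun_sum fun σ _ =>
      (HasDerivAt.fun_finsetProd fun i _ => h (σ i) i).const_mul _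
  convert hsum using 1
  simp_rw [det_apply']
  rw [sum_comm]
  refine sum_congr rfl fun σ _ => ?_
  rw [mul_sum, ← Equiv.sum_comp σ]
  refine sum_congr rfl fun i _ => ?_
  rw [← mul_prod_erase _ _ (mem_univ i), updateRow_self, smul_eq_mul, mul_comm (M' (σ i) i)]
  congr 2
  refine prod_congr rfl fun j hj => ?_
  exact congrFun (updateRow_ne (σ.injective.ne (ne_of_mem_erase hj))) j

theorem hasDerivAt_det_of_hasDerivAt_mul {A M : 𝕜 → Matrix n n 𝕜} {t : 𝕜}
    (h : ∀ i j, HasDerivAt (fun s => M s i j) ((A t * M t) i j) t) :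
    HasDerivAt (fun s => (M s).det) ((A t).trace * (M t).det) t := by
  simpa only [det_updateRow_mul_row, trace, diag, sum_mul] using hasDerivAt_det h

end Matrix

theorem eq_mul_exp_integral_of_hasDerivAt {a f : ℝ → ℝ} (ha : Continuous a)
    (hf : ∀ t, HasDerivAt f (a t * f t) t) (t : ℝ) :
    f t = f 0 * Real.exp (∫ s in (0:ℝ)..t, a s) := by
  set F : ℝ → ℝ := fun t => ∫ s in (0:ℝ)..t, a s
  have hg : ∀ t, HasDerivAt (fun s => f s * Real.exp (-F s)) 0 t := by
    intro t
    have hprod : HasDerivAt (fun s => f s * Real.exp (-F s)) _ t :=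
      (hf t).fun_mul (ha.integral_hasStrictDerivAt 0 t).hasDerivAt.fun_neg.exp
    convert hprod using 1
    ring
  have hconst :=
    is_const_of_deriv_eq_zero (fun t => (hg t).differentiableAt) (fun t => (hg t).deriv) t 0
  have hF0 : F 0 = 0 := intervalIntegral.integral_same
  simp only [hF0, neg_zero, Real.exp_zero, mul_one] at hconst
  rw [← hconst, mul_assoc, ← Real.exp_add, neg_add_cancel, Real.exp_zero, mul_one]

theorem stmt_4_general {d : ℕ}
    (A J : ℝ → Matrix (Fin d) (Fin d) ℝ)
    (hA : Continuous A)
    (hJ : ∀ t i j, HasDerivAt (fun s => J s i j) ((A t * J t) i j) t) :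
    (∀ t, (J t).det = (J 0).det * Real.exp (∫ s in (0:ℝ)..t, Matrix.trace (A s))) ∧
    ((∀ t, Matrix.trace (A t) = 0) → J 0 = 1 → ∀ t, (J t).det = 1) := by
  have liouville : ∀ t, (J t).det = (J 0).det * Real.exp (∫ s in (0:ℝ)..t, Matrix.trace (A s)) :=
    eq_mul_exp_integral_of_hasDerivAt hA.matrix_trace
      fun t => hasDerivAt_det_of_hasDerivAt_mul (hJ t)
  refine ⟨liouville, fun htrace hJ0 t => ?_⟩
  simp [liouville t, htrace, hJ0]

/-- Liouville's formula: if `J' (t) = A(t) * J(t)` (entrywise) for all `t`, with `A`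
continuous, then `det (J t) = det (J 0) * exp (∫_0^t trace (A s) ds)`.
In particular, if `trace (A t) = 0` for all `t` and `J 0 = 1`, then `det (J t) = 1`. -/
theorem stmt_4 {d : ℕ} (hd : 1 ≤ d)
    (A J : ℝ → Matrix (Fin d) (Fin d) ℝ)
    (hA : Continuous A)
    (hJ : ∀ t i j, HasDerivAt (fun s => J s i j) ((A t * J t) i j) t) :
    (∀ t, (J t).det = (J 0).det * Real.exp (∫ s in (0:ℝ)..t, Matrix.trace (A s))) ∧
    ((∀ t, Matrix.trace (A t) = 0) → J 0 = 1 → ∀ t, (J t).det = 1) :=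
  stmt_4_general A J hA hJ
end

section
/- (One-step error recursion of the neural semi-Lagrangian method) Let Ω ⊆ ℝ^d be a bounded open set, let X : Ω → Ω be a C¹ diffeomorphism of Ω onto itself with d_X := √(inf_{y∈Ω} |det DX(y)|) > 0, and let X̃ : Ω → Ω be a measurable map with ‖X̃(x) − X(x)‖ ≤ ρ for all x ∈ Ω. Let v : ℝ^d → ℝ be Lipschitz with constant K, and let u, w ∈ L²(Ω). Then ‖u − w ∘ X‖_{L²(Ω)} ≤ ‖u − v ∘ X̃‖_{L²(Ω)} + K ρ √(vol(Ω)) + (1/d_X) ‖v − w‖_{L²(Ω)}. (Here u plays the role of the new approximation u_{θ^{n+1}}, v the previous approximation u_{θ^n}, w the exact solution at the previous time, X the exact backward characteristic map and X̃ its numerical approximation.) -/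
/-!
Write `u - w ∘ X = (u - v ∘ X̃) + (v ∘ X̃ - v ∘ X) + (v - w) ∘ X` and use the triangle inequality
in `L²(Ω)`. The middle term is pointwise at most `K ρ`. For the last one, the change of variables
`y = X x` and `|det DX| ≥ d_X²` give `d_X² ∫_Ω (v - w)(X x)² dx ≤ ∫_{X(Ω)} (v - w)² = ‖v - w‖²`.
-/

open MeasureTheory ENNReal

lemma Real.sqrt_sInf_image_sq_le {α : Type*} {F : α → ℝ} (hF : ∀ x, 0 ≤ F x) {s : Set α}
    {x : α} (hx : x ∈ s) : √(sInf (F '' s)) ^ 2 ≤ F x := by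
  have hs : ∀ b ∈ F '' s, 0 ≤ b := by
    rintro _ ⟨y, -, rfl⟩
    exact hF y
  rw [Real.sq_sqrt (Real.sInf_nonneg hs)]
  exact csInf_le ⟨0, hs⟩ ⟨x, hx, rfl⟩

namespace MeasureTheory

section lpNorm

variable {α E : Type*} [MeasurableSpace α] {μ : Measure α} [NormedAddCommGroup E] {p : ℝ≥0∞}

lemma lpNorm_two_eq_sqrt_integral_sq {f : α → ℝ} (hf : AEStronglyMeasurable f μ) :
    lpNorm f 2 μ = √(∫ a, f a ^ 2 ∂μ) := by
  rw [lpNorm_eq_integral_norm_rpow_toReal two_ne_zero ofNat_ne_top hf, toReal_ofNat,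
    Real.sqrt_eq_rpow, one_div]
  simp

lemma lpNorm_sub_le_add_add {f g h k : α → E} (hf : MemLp f p μ) (hg : MemLp g p μ)
    (hh : MemLp h p μ) (hp : 1 ≤ p) :
    lpNorm (f - k) p μ ≤ lpNorm (f - g) p μ + lpNorm (g - h) p μ + lpNorm (h - k) p μ := by
  grw [lpNorm_sub_le_lpNorm_sub_add_lpNorm_sub hf hg hp,
    lpNorm_sub_le_lpNorm_sub_add_lpNorm_sub hg hh hp, add_assoc]

lemma lpNorm_le_of_ae_bound [IsFiniteMeasure μ] {f : α → E} {C : ℝ} (hC : 0 ≤ C)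
    (hfC : ∀ᵐ x ∂μ, ‖f x‖ ≤ C) : lpNorm f p μ ≤ μ.real Set.univ ^ p.toReal⁻¹ * C := by
  by_cases hf : AEStronglyMeasurable f μ
  · rw [← toReal_eLpNorm hf]
    refine toReal_le_of_le_ofReal (by positivity) ((eLpNorm_le_of_ae_bound hfC).trans_eq ?_)
    rw [ofReal_mul (by positivity), ← ofReal_rpow_of_nonneg measureReal_nonneg (by positivity),
      measureReal_def, ofReal_toReal (measure_ne_top μ _)]
  · rw [lpNorm_of_not_aestronglyMeasurable hf]
    positivity

end lpNorm

section ChangeOfVariables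

variable {E : Type*} [NormedAddCommGroup E] [NormedSpace ℝ E] [FiniteDimensional ℝ E]
  [MeasurableSpace E] [BorelSpace E] {μ : Measure E} [μ.IsAddHaarMeasure]
  {s : Set E} {f : E → E} {f' : E → E →L[ℝ] E}

lemma mul_setLIntegral_comp_le_of_le_abs_det (hs : MeasurableSet s)
    (hf' : ∀ x ∈ s, HasFDerivWithinAt f (f' x) s x) (hf : Set.InjOn f s) {c : ℝ≥0∞}
    (hc : ∀ x ∈ s, c ≤ ENNReal.ofReal |(f' x).det|) (g : E → ℝ≥0∞) :
    c * ∫⁻ x in s, g (f x) ∂μ ≤ ∫⁻ y in f '' s, g y ∂μ := by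
  rw [lintegral_image_eq_lintegral_abs_det_fderiv_mul μ hs hf' hf]
  refine (lintegral_const_mul_le _ _).trans (setLIntegral_mono' hs fun x hx => ?_)
  gcongr
  exact hc x hx

lemma lpNorm_comp_le_of_le_abs_det (hs : MeasurableSet s)
    (hf' : ∀ x ∈ s, HasFDerivWithinAt f (f' x) s x) (hf : Set.InjOn f s)
    {p : ℝ≥0∞} (hp₀ : p ≠ 0) (hp : p ≠ ∞) {c : ℝ} (hc : 0 < c)
    (hdet : ∀ x ∈ s, c ^ p.toReal ≤ |(f' x).det|) {g : E → ℝ}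
    (hg : MemLp g p (μ.restrict (f '' s))) :
    lpNorm (g ∘ f) p (μ.restrict s) ≤ c⁻¹ * lpNorm g p (μ.restrict (f '' s)) := by
  have hq : 0 < p.toReal := toReal_pos hp₀ hp
  have hmul : ENNReal.ofReal c * eLpNorm (g ∘ f) p (μ.restrict s)
      ≤ eLpNorm g p (μ.restrict (f '' s)) := by
    rw [eLpNorm_eq_lintegral_rpow_enorm_toReal hp₀ hp,
      eLpNorm_eq_lintegral_rpow_enorm_toReal hp₀ hp]
    calc ENNReal.ofReal c * (∫⁻ x in s, ‖g (f x)‖ₑ ^ p.toReal ∂μ) ^ (1 / p.toReal)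
        = (ENNReal.ofReal (c ^ p.toReal) * ∫⁻ x in s, ‖g (f x)‖ₑ ^ p.toReal ∂μ)
            ^ (1 / p.toReal) := by
          rw [mul_rpow_of_nonneg _ _ (by positivity), ← ofReal_rpow_of_nonneg hc.le hq.le,
            ← rpow_mul, mul_one_div_cancel hq.ne', rpow_one]
      _ ≤ (∫⁻ y in f '' s, ‖g y‖ₑ ^ p.toReal ∂μ) ^ (1 / p.toReal) := by
          gcongr
          exact mul_setLIntegral_comp_le_of_le_abs_det hs hf' hf
            (fun x hx => ofReal_le_ofReal (hdet x hx)) _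
  by_cases hgf : AEStronglyMeasurable (g ∘ f) (μ.restrict s)
  · rw [le_inv_mul_iff₀ hc, ← toReal_eLpNorm hgf, ← toReal_eLpNorm hg.aestronglyMeasurable]
    simpa only [toReal_mul, toReal_ofReal hc.le] using toReal_mono hg.eLpNorm_ne_top hmul
  · rw [lpNorm_of_not_aestronglyMeasurable hgf]
    exact mul_nonneg (inv_nonneg.2 hc.le) lpNorm_nonneg

lemma lpNorm_two_comp_le_of_bijOn (hs : MeasurableSet s)
    (hf' : ∀ x ∈ s, HasFDerivWithinAt f (f' x) s x) (hf : Set.BijOn f s s)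
    (hpos : 0 < √(sInf ((fun x => |(f' x).det|) '' s))) {g : E → ℝ}
    (hg : MemLp g 2 (μ.restrict s)) :
    lpNorm (g ∘ f) 2 (μ.restrict s)
      ≤ (√(sInf ((fun x => |(f' x).det|) '' s)))⁻¹ * lpNorm g 2 (μ.restrict s) := by
  have hc (x) (hx : x ∈ s) :
      √(sInf ((fun x => |(f' x).det|) '' s)) ^ (2 : ℝ≥0∞).toReal ≤ |(f' x).det| := by
    rw [toReal_ofNat, Real.rpow_two]
    exact Real.sqrt_sInf_image_sq_le (fun _ => abs_nonneg _) hx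
  simpa only [hf.image_eq] using lpNorm_comp_le_of_le_abs_det hs hf' hf.injOn
    two_ne_zero ofNat_ne_top hpos hc (by rwa [hf.image_eq])

end ChangeOfVariables

end MeasureTheory

lemma LipschitzWith.memLp_comp_of_mapsTo {α E : Type*} [MeasurableSpace α] {μ : Measure α}
    [PseudoMetricSpace E] {K : NNReal} {v : E → ℝ} (hv : LipschitzWith K v)
    {s : Set α} [IsFiniteMeasure (μ.restrict s)] {t : Set E} (hs : MeasurableSet s)
    (ht : Bornology.IsBounded t) {f : α → E} (hf : Set.MapsTo f s t)
    (hvf : AEStronglyMeasurable (v ∘ f) (μ.restrict s)) (p : ℝ≥0∞) :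
    MemLp (v ∘ f) p (μ.restrict s) :=
  have ⟨C, hC⟩ := isBounded_iff_forall_norm_le.mp (hv.isBounded_image ht)
  .of_bound hvf C (ae_restrict_of_forall_mem hs fun _ hx => hC _ ⟨_, hf hx, rfl⟩)

lemma LipschitzWith.lpNorm_two_comp_sub_comp_le {α E F : Type*} [MeasurableSpace α]
    {μ : Measure α} [IsFiniteMeasure μ] [PseudoMetricSpace E] [NormedAddCommGroup F]
    {K : NNReal} {v : E → F} (hv : LipschitzWith K v) {f g : α → E} {ρ : ℝ}
    (hfg : ∀ᵐ x ∂μ, dist (f x) (g x) ≤ ρ) :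
    lpNorm (v ∘ f - v ∘ g) 2 μ ≤ K * ρ * √(μ.real Set.univ) := by
  rcases eq_zero_or_neZero μ with rfl | _
  · simp
  obtain ⟨x₀, hx₀⟩ := hfg.exists
  have hρ : 0 ≤ ρ := dist_nonneg.trans hx₀
  have hbound : ∀ᵐ x ∂μ, ‖(v ∘ f - v ∘ g) x‖ ≤ K * ρ :=
    hfg.mono fun x hx => (dist_eq_norm (v (f x)) (v (g x))) ▸ hv.dist_le_mul_of_le hx
  simpa [mul_comm, Real.sqrt_eq_rpow] using lpNorm_le_of_ae_bound (p := 2) (by positivity) hbound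

theorem stmt_7_general {d : ℕ} (Ω : Set (EuclideanSpace ℝ (Fin d)))
    (hΩ_open : IsOpen Ω) (hΩ_bdd : Bornology.IsBounded Ω)
    (X : EuclideanSpace ℝ (Fin d) → EuclideanSpace ℝ (Fin d))
    (hXbij : Set.BijOn X Ω Ω)
    (X' : EuclideanSpace ℝ (Fin d) →
      (EuclideanSpace ℝ (Fin d) →L[ℝ] EuclideanSpace ℝ (Fin d)))
    (hX' : ∀ y ∈ Ω, HasFDerivWithinAt X (X' y) Ω y)
    (dX : ℝ)
    (hdX : dX = Real.sqrt (sInf ((fun y => |ContinuousLinearMap.det (X' y)|) '' Ω)))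
    (hdX_pos : 0 < dX)
    (Xt : EuclideanSpace ℝ (Fin d) → EuclideanSpace ℝ (Fin d))
    (hXt_meas : Measurable Xt) (hXt_maps : Set.MapsTo Xt Ω Ω)
    (ρ : ℝ) (hρ : ∀ x ∈ Ω, ‖Xt x - X x‖ ≤ ρ)
    (v : EuclideanSpace ℝ (Fin d) → ℝ) (K : ℝ) (hK : 0 ≤ K)
    (hv_lip : ∀ y z, |v y - v z| ≤ K * ‖y - z‖)
    (u w : EuclideanSpace ℝ (Fin d) → ℝ)
    (hw_meas : Measurable w)
    (hu_L2 : MemLp u 2 (volume.restrict Ω)) (hw_L2 : MemLp w 2 (volume.restrict Ω)) :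
    Real.sqrt (∫ x in Ω, (u x - w (X x)) ^ 2)
      ≤ Real.sqrt (∫ x in Ω, (u x - v (Xt x)) ^ 2)
        + K * ρ * Real.sqrt ((volume Ω).toReal)
        + (1 / dX) * Real.sqrt (∫ x in Ω, (v x - w x) ^ 2) := by
  have hΩ : MeasurableSet Ω := hΩ_open.measurableSet
  set μ := volume.restrict Ω
  have : IsFiniteMeasure μ := isFiniteMeasure_restrict.2 hΩ_bdd.measure_lt_top.ne
  have hv : LipschitzWith ⟨K, hK⟩ v := .of_dist_le_mul fun y z => by
    rw [Real.dist_eq, dist_eq_norm]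
    exact hv_lip y z
  have hX : ContinuousOn X Ω := fun x hx => (hX' x hx).continuousWithinAt
  have hvXt : MemLp (v ∘ Xt) 2 μ := hv.memLp_comp_of_mapsTo hΩ hΩ_bdd
    hXt_maps (hv.continuous.measurable.comp hXt_meas).aestronglyMeasurable 2
  have hvX : MemLp (v ∘ X) 2 μ := hv.memLp_comp_of_mapsTo hΩ hΩ_bdd
    hXbij.mapsTo ((hv.continuous.comp_continuousOn hX).aestronglyMeasurable hΩ) 2
  have hvw : MemLp (v - w) 2 μ := .sub (hv.memLp_comp_of_mapsTo hΩ hΩ_bdd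
    (Set.mapsTo_id Ω) hv.continuous.aestronglyMeasurable 2) hw_L2
  have hwX : AEStronglyMeasurable (w ∘ X) μ :=
    (hw_meas.comp_aemeasurable (hX.aemeasurable hΩ)).aestronglyMeasurable
  have hlip : lpNorm (v ∘ Xt - v ∘ X) 2 μ ≤ K * ρ * √(volume Ω).toReal := by
    have hdist : ∀ᵐ x ∂μ, dist (Xt x) (X x) ≤ ρ :=
      ae_restrict_of_forall_mem hΩ fun x hx => (dist_eq_norm _ _).trans_le (hρ x hx)
    refine (hv.lpNorm_two_comp_sub_comp_le hdist).trans_eq ?_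
    rw [measureReal_restrict_apply_univ]
    rfl
  have hcov : lpNorm ((v - w) ∘ X) 2 μ ≤ dX⁻¹ * lpNorm (v - w) 2 μ := by
    subst hdX
    exact lpNorm_two_comp_le_of_bijOn hΩ hX' hXbij hdX_pos hvw
  calc √(∫ x in Ω, (u x - w (X x)) ^ 2)
      = lpNorm (u - w ∘ X) 2 μ := (lpNorm_two_eq_sqrt_integral_sq (hu_L2.1.sub hwX)).symm
    _ ≤ lpNorm (u - v ∘ Xt) 2 μ + lpNorm (v ∘ Xt - v ∘ X) 2 μ + lpNorm ((v - w) ∘ X) 2 μ :=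
        lpNorm_sub_le_add_add hu_L2 hvXt hvX one_le_two
    _ ≤ _ := by
        grw [hlip, hcov, lpNorm_two_eq_sqrt_integral_sq (hu_L2.1.sub hvXt.1),
          lpNorm_two_eq_sqrt_integral_sq hvw.1, one_div]
        rfl

/-- One-step error recursion of the neural semi-Lagrangian method:
`‖u − w ∘ X‖_{L²(Ω)} ≤ ‖u − v ∘ X̃‖_{L²(Ω)} + K ρ √(vol Ω) + (1/d_X) ‖v − w‖_{L²(Ω)}`,
where `X` is a C¹ diffeomorphism of the bounded open set `Ω` onto itself with
`d_X = √(inf_Ω |det DX|) > 0`, `X̃` is a measurable approximation of `X` within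
distance `ρ`, and `v` is `K`-Lipschitz. -/
theorem stmt_7 {d : ℕ} (Ω : Set (EuclideanSpace ℝ (Fin d)))
    (hΩ_open : IsOpen Ω) (hΩ_bdd : Bornology.IsBounded Ω)
    (X Xinv : EuclideanSpace ℝ (Fin d) → EuclideanSpace ℝ (Fin d))
    (hXbij : Set.BijOn X Ω Ω)
    (hXC1 : ContDiffOn ℝ 1 X Ω) (hXinvC1 : ContDiffOn ℝ 1 Xinv Ω)
    (hleft : ∀ x ∈ Ω, Xinv (X x) = x) (hright : ∀ y ∈ Ω, X (Xinv y) = y)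
    (X' : EuclideanSpace ℝ (Fin d) →
      (EuclideanSpace ℝ (Fin d) →L[ℝ] EuclideanSpace ℝ (Fin d)))
    (hX' : ∀ y ∈ Ω, HasFDerivWithinAt X (X' y) Ω y)
    (dX : ℝ)
    (hdX : dX = Real.sqrt (sInf ((fun y => |ContinuousLinearMap.det (X' y)|) '' Ω)))
    (hdX_pos : 0 < dX)
    (Xt : EuclideanSpace ℝ (Fin d) → EuclideanSpace ℝ (Fin d))
    (hXt_meas : Measurable Xt) (hXt_maps : Set.MapsTo Xt Ω Ω)
    (ρ : ℝ) (hρ : ∀ x ∈ Ω, ‖Xt x - X x‖ ≤ ρ)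
    (v : EuclideanSpace ℝ (Fin d) → ℝ) (K : ℝ) (hK : 0 ≤ K)
    (hv_lip : ∀ y z, |v y - v z| ≤ K * ‖y - z‖)
    (u w : EuclideanSpace ℝ (Fin d) → ℝ)
    (hu_meas : Measurable u) (hw_meas : Measurable w)
    (hu_L2 : MemLp u 2 (volume.restrict Ω)) (hw_L2 : MemLp w 2 (volume.restrict Ω)) :
    Real.sqrt (∫ x in Ω, (u x - w (X x)) ^ 2)
      ≤ Real.sqrt (∫ x in Ω, (u x - v (Xt x)) ^ 2)
        + K * ρ * Real.sqrt ((volume Ω).toReal)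
        + (1 / dX) * Real.sqrt (∫ x in Ω, (v x - w x) ^ 2) :=
  stmt_7_general Ω hΩ_open hΩ_bdd X hXbij X' hX' dX hdX hdX_pos Xt hXt_meas hXt_maps ρ hρ v K hK
    hv_lip u w hw_meas hu_L2 hw_L2
end
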